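/- arXiv:2308.07923 — 2 statements merged into one kernel-verified Lean document; each statement's English description precedes it below -/
import Mathlib

section
/- In the lattice of quasiorders on a finite set A of size n ≥ 2 ordered by inclusion, the maximum element (the total relation A × A) has exactly 2^n − 2 lower covers: they are precisely the quasiorders consisting of two indifference classes X and A \ X (for nonempty proper X ⊆ A) with X strictly below A \ X. -/
/-- A quasiorder: a reflexive and transitive binary relation (as a set of pairs). -/
def IsQuasiorder {α : Type*} (R : Set (α × α)) : Prop :=
  (∀ a, (a, a) ∈ R) ∧ ∀ a b c, (a, b) ∈ R → (b, c) ∈ R → (a, c) ∈ R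

open Set

lemma qx_mem {A : Type*} (X : Set A) (p : A × A) :
    p ∈ (univ \ (Xᶜ ×ˢ X)) ↔ (p.1 ∉ X → p.2 ∉ X) := by
  simp only [mem_diff, mem_univ, true_and, mem_prod, mem_compl_iff, not_and]

lemma qx_quasi {A : Type*} (X : Set A) : IsQuasiorder (univ \ (Xᶜ ×ˢ X)) := by
  constructor
  · intro a; rw [qx_mem]; tauto
  · intro a b c hab hbc
    rw [qx_mem] at *
    intro ha
    by_cases hb : b ∈ X
    · exact absurd hb (hab ha)
    · exact hbc hb

/-- The lower covers of the maximum quasiorder `A × A` on a set of size `n ≥ 2` are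
exactly the quasiorders `Q_X = (A×A) \ ((A\X) × X)` for nonempty proper `X ⊆ A`, and
there are exactly `2^n - 2` of them. -/
theorem stmt12 {A : Type*} [Fintype A] (n : ℕ)
    (hcard : Fintype.card A = n) (hn : 2 ≤ n) :
    {Q : Set (A × A) | IsQuasiorder Q ∧ Q ⊂ Set.univ ∧
        ¬ ∃ T : Set (A × A), IsQuasiorder T ∧ Q ⊂ T ∧ T ⊂ Set.univ} =
      {Q : Set (A × A) | ∃ X : Set A, X.Nonempty ∧ X ≠ Set.univ ∧
        Q = Set.univ \ (Xᶜ ×ˢ X)} ∧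
    {Q : Set (A × A) | IsQuasiorder Q ∧ Q ⊂ Set.univ ∧
        ¬ ∃ T : Set (A × A), IsQuasiorder T ∧ Q ⊂ T ∧ T ⊂ Set.univ}.ncard =
      2 ^ n - 2 := by
  have hset : {Q : Set (A × A) | IsQuasiorder Q ∧ Q ⊂ Set.univ ∧
        ¬ ∃ T : Set (A × A), IsQuasiorder T ∧ Q ⊂ T ∧ T ⊂ Set.univ} =
      {Q : Set (A × A) | ∃ X : Set A, X.Nonempty ∧ X ≠ Set.univ ∧
        Q = Set.univ \ (Xᶜ ×ˢ X)} := by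
    ext Q
    simp only [mem_setOf_eq]
    constructor
    · rintro ⟨hQ, hQu, hmax⟩
      obtain ⟨p, -, hp⟩ := exists_of_ssubset hQu
      obtain ⟨a, b⟩ := p
      set X : Set A := {x | (a, x) ∉ Q} with hX
      have hbX : b ∈ X := hp
      have haX : a ∉ X := by simp [hX, hQ.1 a]
      refine ⟨X, ⟨b, hbX⟩, fun h => haX (h ▸ mem_univ a), ?_⟩
      have hsub : Q ⊆ univ \ (Xᶜ ×ˢ X) := by
        rintro ⟨u, v⟩ huv
        rw [qx_mem]
        intro hu hv
        simp only [hX, mem_setOf_eq, not_not] at hu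
        exact hv (hQ.2 a u v hu huv)
      have hQXu : univ \ (Xᶜ ×ˢ X) ⊂ univ := by
        refine (ssubset_univ_iff).mpr (fun h => ?_)
        have : (a, b) ∈ univ \ (Xᶜ ×ˢ X) := by rw [h]; trivial
        rw [qx_mem] at this
        exact this haX hbX
      by_contra hne
      exact hmax ⟨univ \ (Xᶜ ×ˢ X), qx_quasi X, hsub.ssubset_of_ne hne, hQXu⟩
    · rintro ⟨X, ⟨b, hb⟩, hXu, rfl⟩
      obtain ⟨a, -, ha⟩ : ∃ a ∈ (univ : Set A), a ∉ X := by
        by_contra h; push_neg at h; exact hXu (eq_univ_of_univ_subset (fun x _ => h x trivial))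
      refine ⟨qx_quasi X, ?_, ?_⟩
      · refine (ssubset_univ_iff).mpr (fun h => ?_)
        have : (a, b) ∈ univ \ (Xᶜ ×ˢ X) := by rw [h]; trivial
        rw [qx_mem] at this
        exact this ha hb
      · rintro ⟨T, hT, hQT, hTu⟩
        obtain ⟨⟨u, v⟩, huvT, huv⟩ := exists_of_ssubset hQT
        rw [qx_mem] at huv
        push_neg at huv
        obtain ⟨hu, hv⟩ := huv
        apply hTu.ne
        ext ⟨c, d⟩
        simp only [mem_univ, iff_true]
        by_cases hc : c ∉ X ∧ d ∈ X
        · have h1 : (c, u) ∈ T := hQT.subset (by rw [qx_mem]; exact fun _ => hu)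
          have h2 : (v, d) ∈ T := hQT.subset (by rw [qx_mem]; exact fun h => absurd hv h)
          exact hT.2 c v d (hT.2 c u v h1 huvT) h2
        · exact hQT.subset (by rw [qx_mem]; tauto)
  refine ⟨hset, ?_⟩
  rw [hset]
  have himg : {Q : Set (A × A) | ∃ X : Set A, X.Nonempty ∧ X ≠ Set.univ ∧
        Q = Set.univ \ (Xᶜ ×ˢ X)} =
      (fun X : Set A => univ \ (Xᶜ ×ˢ X)) '' {X : Set A | X.Nonempty ∧ X ≠ univ} := by
    ext Q
    simp only [mem_image, mem_setOf_eq]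
    constructor
    · rintro ⟨X, h1, h2, rfl⟩; exact ⟨X, ⟨h1, h2⟩, rfl⟩
    · rintro ⟨X, ⟨h1, h2⟩, rfl⟩; exact ⟨X, h1, h2, rfl⟩
  rw [himg]
  have hinj : Set.InjOn (fun X : Set A => univ \ (Xᶜ ×ˢ X))
      {X : Set A | X.Nonempty ∧ X ≠ univ} := by
    have key : ∀ X Y : Set A, X.Nonempty ∧ X ≠ univ → Y.Nonempty ∧ Y ≠ univ →
        univ \ (Xᶜ ×ˢ X) = univ \ (Yᶜ ×ˢ Y) → X ⊆ Y := by
      rintro X Y ⟨-, hXu⟩ ⟨-, -⟩ heq b hb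
      obtain ⟨a, -, ha⟩ : ∃ a ∈ (univ : Set A), a ∉ X := by
        by_contra h; push_neg at h; exact hXu (eq_univ_of_univ_subset (fun x _ => h x trivial))
      have : (a, b) ∉ univ \ (Yᶜ ×ˢ Y) := by
        rw [← heq, qx_mem]; push_neg; exact ⟨ha, hb⟩
      rw [qx_mem] at this
      push_neg at this
      exact this.2
    intro X hX Y hY h
    exact subset_antisymm (key X Y hX hY h) (key Y X hY hX h.symm)
  rw [Set.ncard_image_of_injOn hinj]
  have hcompl : {X : Set A | X.Nonempty ∧ X ≠ univ} = ({∅, univ} : Set (Set A))ᶜ := by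
    ext X
    simp [nonempty_iff_ne_empty, and_comm]
  have hA : (∅ : Set A) ≠ univ := by
    have hpos : 0 < Fintype.card A := by omega
    obtain ⟨x⟩ := Fintype.card_pos_iff.mp hpos
    intro h
    exact (by rw [h]; trivial : x ∈ (∅ : Set A))
  have h2 : ({∅, univ} : Set (Set A)).ncard = 2 := Set.ncard_pair hA
  have := Set.ncard_add_ncard_compl ({∅, univ} : Set (Set A))
  rw [hcompl]
  have hcardset : Nat.card (Set A) = 2 ^ n := by
    rw [Nat.card_eq_fintype_card, Fintype.card_set, hcard]
  omega
end

section
/- Let L be a finite lattice with n ≥ 2 elements in which ⊤ ≠ ⊥, and let A be a maximal antichain in L (so every x ∉ A is comparable to some element of A) with ⊤, ⊥ ∉ A. For each a ∈ A, define f_a : L → L by: f_a(⊤) = ⊤, f_a(⊥) = ⊥, f_a(a) = a, f_a(x) = ⊥ for x ∈ A \ {a}, and for x ∉ A ∪ {⊤, ⊥}: f_a(x) = ⊥ if x ≤ y for some y ∈ A, and f_a(x) = ⊤ otherwise. Then f_a is isotone and its fixed points are exactly {⊥, a, ⊤}. -/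
open Classical in
/-- For a maximal antichain `A` avoiding `⊤` and `⊥` in a finite lattice with at
least two elements, the map `f_a` (for `a ∈ A`) is isotone with fixed points exactly
`{⊥, a, ⊤}`. -/
theorem stmt14 {L : Type*} [Lattice L] [Fintype L] [BoundedOrder L]
    (hcard : 2 ≤ Fintype.card L) (hne : (⊤ : L) ≠ ⊥)
    (A : Set L) (hA : IsAntichain (· ≤ ·) A)
    (hmax : ∀ x : L, x ∉ A → ∃ y ∈ A, x ≤ y ∨ y ≤ x)
    (htop : (⊤ : L) ∉ A) (hbot : (⊥ : L) ∉ A) (a : L) (ha : a ∈ A) :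
    Monotone (fun x : L =>
      if x = ⊤ then ⊤ else if x = ⊥ then ⊥ else if x = a then a
      else if x ∈ A then ⊥ else if ∃ y ∈ A, x ≤ y then ⊥ else ⊤) ∧
    Function.fixedPoints (fun x : L =>
      if x = ⊤ then ⊤ else if x = ⊥ then ⊥ else if x = a then a
      else if x ∈ A then ⊥ else if ∃ y ∈ A, x ≤ y then ⊥ else ⊤) =
      {⊥, a, ⊤} := by
  have hane : a ≠ ⊤ := fun h => htop (h ▸ ha)
  have hanb : a ≠ ⊥ := fun h => hbot (h ▸ ha)
  constructor
  · intro x y hxy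
    simp only
    by_cases hx1 : x = ⊤
    · have hyt : y = ⊤ := top_le_iff.mp (hx1 ▸ hxy)
      simp [hx1, hyt]
    by_cases hx2 : x = ⊥
    · simp only [if_neg hx1, if_pos hx2]
      exact bot_le
    by_cases hx3 : x = a
    · simp only [if_neg hx1, if_neg hx2, if_pos hx3]
      have hxy' : a ≤ y := hx3 ▸ hxy
      by_cases hy1 : y = ⊤
      · simp [hy1]
      by_cases hy2 : y = ⊥
      · exact absurd (le_bot_iff.mp (hy2 ▸ hxy')) hanb
      by_cases hy3 : y = a
      · simp [hy1, hy2, hy3, hane, hanb]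
      by_cases hy4 : y ∈ A
      · exact absurd hxy' (hA ha hy4 (fun h => hy3 h.symm))
      have hy5 : ¬∃ z ∈ A, y ≤ z := by
        rintro ⟨z, hz, hyz⟩
        rcases eq_or_ne z a with rfl | hza
        · exact hy3 (le_antisymm hyz hxy')
        · exact hA ha hz (Ne.symm hza) (hxy'.trans hyz)
      simp [hy1, hy2, hy3, hy4, hy5]
    by_cases hx4 : x ∈ A
    · simp only [if_neg hx1, if_neg hx2, if_neg hx3, if_pos hx4]
      exact bot_le
    by_cases hx5 : ∃ z ∈ A, x ≤ z
    · simp only [if_neg hx1, if_neg hx2, if_neg hx3, if_neg hx4, if_pos hx5]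
      exact bot_le
    simp only [if_neg hx1, if_neg hx2, if_neg hx3, if_neg hx4, if_neg hx5]
    by_cases hyt : y = ⊤
    · simp [hyt]
    have hy1 : y ≠ ⊥ := fun h => hx2 (le_bot_iff.mp (h ▸ hxy))
    have hy3 : y ≠ a := fun h => hx5 ⟨a, ha, h ▸ hxy⟩
    have hy4 : y ∉ A := fun h => hx5 ⟨y, h, hxy⟩
    have hy5 : ¬∃ z ∈ A, y ≤ z := fun ⟨z, hz, hyz⟩ => hx5 ⟨z, hz, hxy.trans hyz⟩
    simp [hyt, hy1, hy3, hy4, hy5]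
  · ext x
    simp only [Function.fixedPoints, Function.IsFixedPt, Set.mem_setOf_eq,
      Set.mem_insert_iff, Set.mem_singleton_iff]
    constructor
    · intro hx
      by_cases h1 : x = ⊤
      · tauto
      by_cases h2 : x = ⊥
      · tauto
      by_cases h3 : x = a
      · tauto
      simp only [h1, h2, h3, if_false] at hx
      split_ifs at hx <;> tauto
    · rintro (rfl | rfl | rfl)
      · simp [Ne.symm hne]
      · simp [hane, hanb]
      · simp
end
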